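/- Suppose the Poincaré polynomial of (G, Re) is palindrome, and let m ∈ G be the unique element with ℓ(m) = d. Then for every g ∈ G one has ℓ(m g⁻¹) = d − ℓ(g). -/
import Mathlib


/-- The length of `g ∈ G` with respect to a generating set `Re`:
the smallest `n` such that `g` is a product of `n` elements of `Re`. -/
noncomputable def wordLength {G : Type*} [Group G] (Re : Set G) (g : G) : ℕ :=
  sInf {n : ℕ | ∃ l : List G, (∀ x ∈ l, x ∈ Re) ∧ l.length = n ∧ l.prod = g}

section Aux

variable {G : Type*} [Group G] (Re : Set G)

/-- The submonoid of elements expressible as products of elements of `Re`. -/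
def wordSubmonoid : Submonoid G where
  carrier := {g | ∃ l : List G, (∀ x ∈ l, x ∈ Re) ∧ l.prod = g}
  one_mem' := ⟨[], by simp, by simp⟩
  mul_mem' := by
    rintro a b ⟨l₁, h₁, rfl⟩ ⟨l₂, h₂, rfl⟩
    exact ⟨l₁ ++ l₂, by
      intro x hx
      rcases List.mem_append.mp hx with h | h
      · exact h₁ x h
      · exact h₂ x h, by simp⟩

lemma exists_word [Finite G] (hgen : Subgroup.closure Re = ⊤) (g : G) :
    ∃ l : List G, (∀ x ∈ l, x ∈ Re) ∧ l.prod = g := by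
  have key : ∀ g : G, g ∈ Subgroup.closure Re → g ∈ wordSubmonoid Re := by
    intro g hg
    induction hg using Subgroup.closure_induction with
    | mem x hx => exact ⟨[x], by simpa using hx, by simp⟩
    | one => exact (wordSubmonoid Re).one_mem
    | mul x y _ _ hx hy => exact (wordSubmonoid Re).mul_mem hx hy
    | inv x _ hx =>
        have hord : 0 < orderOf x := orderOf_pos x
        have hpow : x ^ (orderOf x - 1) ∈ wordSubmonoid Re :=
          Submonoid.pow_mem _ hx _
        have : x⁻¹ = x ^ (orderOf x - 1) := by
          apply inv_eq_of_mul_eq_one_right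
          rw [← pow_succ', Nat.sub_add_cancel hord]
          exact pow_orderOf_eq_one x
        rwa [this]
  exact key g (by rw [hgen]; trivial)

lemma wordLength_set_nonempty [Finite G] (hgen : Subgroup.closure Re = ⊤) (g : G) :
    {n : ℕ | ∃ l : List G, (∀ x ∈ l, x ∈ Re) ∧ l.length = n ∧ l.prod = g}.Nonempty := by
  obtain ⟨l, hl, hp⟩ := exists_word Re hgen g
  exact ⟨l.length, l, hl, rfl, hp⟩

lemma exists_word_length [Finite G] (hgen : Subgroup.closure Re = ⊤) (g : G) :
    ∃ l : List G, (∀ x ∈ l, x ∈ Re) ∧ l.length = wordLength Re g ∧ l.prod = g :=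
  Nat.sInf_mem (wordLength_set_nonempty Re hgen g)

lemma wordLength_mul_le [Finite G] (hgen : Subgroup.closure Re = ⊤) (a b : G) :
    wordLength Re (a * b) ≤ wordLength Re a + wordLength Re b := by
  obtain ⟨la, hla, hlena, hpa⟩ := exists_word_length Re hgen a
  obtain ⟨lb, hlb, hlenb, hpb⟩ := exists_word_length Re hgen b
  apply Nat.sInf_le
  refine ⟨la ++ lb, ?_, by simp [hlena, hlenb], by simp [hpa, hpb]⟩
  intro x hx
  rcases List.mem_append.mp hx with h | h
  · exact hla x h
  · exact hlb x h

end Aux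

/-- If the Poincaré polynomial of `(G, Re)` is palindrome and `m` is the unique
element of maximal length `d`, then `ℓ(m * g⁻¹) = d - ℓ(g)` for every `g`. -/
theorem length_mul_inv_of_palindrome
    {G : Type*} [Group G] [Finite G] (Re : Set G)
    (hgen : Subgroup.closure Re = ⊤) (hne : (1 : G) ∉ Re)
    (d : ℕ) (hub : ∀ g : G, wordLength Re g ≤ d) (hex : ∃ g : G, wordLength Re g = d)
    (hpal : ∀ i ≤ d, Nat.card {g : G // wordLength Re g = i}
      = Nat.card {g : G // wordLength Re g = d - i})
    (m : G) (hm : wordLength Re m = d)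
    (hmu : ∀ g : G, wordLength Re g = d → g = m) :
    ∀ g : G, wordLength Re (m * g⁻¹) = d - wordLength Re g := by
  classical
  have := Fintype.ofFinite G
  set ℓ := wordLength Re with hℓ
  -- pointwise inequality : d - ℓ(m g⁻¹) ≤ ℓ g
  have hpt : ∀ g : G, d - ℓ (m * g⁻¹) ≤ ℓ g := by
    intro g
    have : ℓ m ≤ ℓ (m * g⁻¹) + ℓ g := by
      have := wordLength_mul_le Re hgen (m * g⁻¹) g
      simpa using this
    omega
  -- counts of fibers agree
  have hcard : ∀ i : ℕ, i ≤ d →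
      (Finset.univ.filter (fun g : G => d - ℓ (m * g⁻¹) = i)).card
        = (Finset.univ.filter (fun g : G => ℓ g = i)).card := by
    intro i hi
    have h1 : (Finset.univ.filter (fun g : G => d - ℓ (m * g⁻¹) = i))
        = (Finset.univ.filter (fun g : G => ℓ (m * g⁻¹) = d - i)) := by
      apply Finset.filter_congr
      intro g _
      have h2 := hub (m * g⁻¹)
      constructor <;> intro h <;> simp only [eq_iff_iff, hℓ] at * <;> omega
    rw [h1]
    -- bijection g ↦ m * g⁻¹
    have h2 : (Finset.univ.filter (fun g : G => ℓ (m * g⁻¹) = d - i)).card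
        = (Finset.univ.filter (fun x : G => ℓ x = d - i)).card := by
      apply Finset.card_bij (fun g _ => m * g⁻¹)
      · intro g hg
        simp only [Finset.mem_filter, Finset.mem_univ, true_and] at hg ⊢
        exact hg
      · intro a ha b hb hab
        have : a⁻¹ = b⁻¹ := mul_left_cancel hab
        exact inv_injective this
      · intro x hx
        refine ⟨x⁻¹ * m, Finset.mem_filter.mpr ⟨Finset.mem_univ _, ?_⟩, by group⟩
        simp only [Finset.mem_filter, Finset.mem_univ, true_and] at hx
        have : m * (x⁻¹ * m)⁻¹ = x := by group
        rw [this]; exact hx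
    rw [h2]
    -- palindromicity
    have h3 := hpal (d - i) (by omega)
    have hdd : d - (d - i) = i := by omega
    rw [hdd] at h3
    have e1 : Nat.card {g : G // ℓ g = d - i}
        = (Finset.univ.filter (fun x : G => ℓ x = d - i)).card := by
      rw [Nat.card_eq_fintype_card, Fintype.card_subtype]
    have e2 : Nat.card {g : G // ℓ g = i}
        = (Finset.univ.filter (fun x : G => ℓ x = i)).card := by
      rw [Nat.card_eq_fintype_card, Fintype.card_subtype]
    omega
  -- sums agree
  have hsum : ∑ g : G, (d - ℓ (m * g⁻¹)) = ∑ g : G, ℓ g := by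
    have key : ∀ u : G → ℕ, (∀ g, u g ≤ d) →
        ∑ g : G, u g = ∑ i ∈ Finset.range (d + 1),
          i * (Finset.univ.filter (fun g : G => u g = i)).card := by
      intro u hu
      rw [← Finset.sum_fiberwise_of_maps_to (g := u) (f := u)
        (t := Finset.range (d + 1)) (fun g _ => Finset.mem_range.mpr (by
          have := hu g; omega))]
      apply Finset.sum_congr rfl
      intro i _
      rw [Finset.sum_congr rfl (fun g hg => (Finset.mem_filter.mp hg).2),
        Finset.sum_const, smul_eq_mul, mul_comm]
    rw [key _ (fun g => Nat.sub_le _ _), key _ hub]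
    apply Finset.sum_congr rfl
    intro i hi
    rw [hcard i (by simpa using Nat.lt_succ_iff.mp (Finset.mem_range.mp hi))]
  -- pointwise equality from sums
  have heq : ∀ g : G, d - ℓ (m * g⁻¹) = ℓ g := by
    intro g
    by_contra hne'
    have hlt : d - ℓ (m * g⁻¹) < ℓ g := lt_of_le_of_ne (hpt g) hne'
    have : ∑ x : G, (d - ℓ (m * x⁻¹)) < ∑ x : G, ℓ x :=
      Finset.sum_lt_sum (fun x _ => hpt x) ⟨g, Finset.mem_univ g, hlt⟩
    omega
  intro g
  have h1 := heq g
  have h2 := hub (m * g⁻¹)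
  omega
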